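/- Let Z be a convex set and y ∈ Z. Suppose x' = y - k·(y - x) for some x ∈ Z, x' ∈ Z and k ≥ 1. Then t_y(x') ≤ t_y(x). -/

import Mathlib

/-- The weight function `t_y(x) = sup{ t ∈ [0,1) : (y - t·x)/(1-t) ∈ Z }`. -/
noncomputable def weight {V : Type*} [AddCommGroup V] [Module ℝ V] (Z : Set V) (y x : V) : ℝ :=
  sSup {t : ℝ | 0 ≤ t ∧ t < 1 ∧ (1 - t)⁻¹ • (y - t • x) ∈ Z}

/-! The point `(1 - t)⁻¹ • (y - t • x)` is a convex combination of `x` and of the corresponding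
point for `x' = y - k • (y - x)`, with weights proportional to `1` and `t (k - 1)`. So every `t`
admissible for `x'` is admissible for `x`, and the supremum can only grow. -/

section Weight

variable {V : Type*} [AddCommGroup V] [Module ℝ V]

def weightSet (Z : Set V) (y x : V) : Set ℝ :=
  {t : ℝ | 0 ≤ t ∧ t < 1 ∧ (1 - t)⁻¹ • (y - t • x) ∈ Z}

theorem weight_eq_sSup_weightSet (Z : Set V) (y x : V) :
    weight Z y x = sSup (weightSet Z y x) :=
  rfl

theorem bddAbove_weightSet (Z : Set V) (y x : V) : BddAbove (weightSet Z y x) :=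
  ⟨1, fun _ ht => ht.2.1.le⟩

theorem weight_nonneg (Z : Set V) (y x : V) : 0 ≤ weight Z y x :=
  Real.sSup_nonneg fun _ ht => ht.1

theorem weight_le_weight_of_weightSet_subset {Z : Set V} {y x x' : V}
    (h : weightSet Z y x' ⊆ weightSet Z y x) : weight Z y x' ≤ weight Z y x := by
  rcases (weightSet Z y x').eq_empty_or_nonempty with he | hne
  · rw [weight_eq_sSup_weightSet, he, Real.sSup_empty]
    exact weight_nonneg Z y x
  · exact csSup_le_csSup (bddAbove_weightSet Z y x) hne h

theorem inv_one_sub_smul_eq_combo_ray (y x : V) {t k : ℝ} (ht : t ≠ 1)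
    (hd : 1 - t + t * k ≠ 0) :
    (1 - t)⁻¹ • (y - t • x) =
      (1 - t + t * k)⁻¹ • ((1 - t)⁻¹ • (y - t • (y - k • (y - x)))) +
        (t * (k - 1) / (1 - t + t * k)) • x := by
  have h1t : 1 - t ≠ 0 := sub_ne_zero.mpr (Ne.symm ht)
  match_scalars <;> field_simp <;> ring

theorem weightSet_ray_subset {Z : Set V} (hZ : Convex ℝ Z) {y x : V} (hx : x ∈ Z) {k : ℝ}
    (hk : 1 ≤ k) : weightSet Z y (y - k • (y - x)) ⊆ weightSet Z y x := by
  rintro t ⟨ht0, ht1, hmem⟩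
  have hd : 0 < 1 - t + t * k := by nlinarith
  refine ⟨ht0, ht1, ?_⟩
  rw [inv_one_sub_smul_eq_combo_ray y x ht1.ne hd.ne']
  refine hZ hmem hx (inv_nonneg.mpr hd.le)
    (div_nonneg (mul_nonneg ht0 (by linarith)) hd.le) ?_
  field_simp
  ring

end Weight

theorem weight_antitone_on_ray_general {V : Type*} [AddCommGroup V] [Module ℝ V]
    (Z : Set V) (hZ : Convex ℝ Z) (y : V)
    (x x' : V) (hx : x ∈ Z) (k : ℝ) (hk : 1 ≤ k)
    (hray : x' = y - k • (y - x)) :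
    weight Z y x' ≤ weight Z y x := by
  subst hray
  exact weight_le_weight_of_weightSet_subset (weightSet_ray_subset hZ hx hk)

theorem weight_antitone_on_ray {V : Type*} [AddCommGroup V] [Module ℝ V]
    (Z : Set V) (hZ : Convex ℝ Z) (y : V) (hy : y ∈ Z)
    (x x' : V) (hx : x ∈ Z) (hx' : x' ∈ Z) (k : ℝ) (hk : 1 ≤ k)
    (hray : x' = y - k • (y - x)) :
    weight Z y x' ≤ weight Z y x :=
  weight_antitone_on_ray_general Z hZ y x x' hx k hk hray
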